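/- Fix ν ≥ 2, let G be a distribution on (0,∞), and define the marginal densities f_G(·; ν) and f_G(·; ν+1) of the sample variance with ν and ν+1 degrees of freedom respectively. Then the conditional p-value P_G(z, s²) = E_G[2(1 - Φ(|z|/σ)) | S² = s²] admits the integral representation P_G(z, s²) = C(ν) · (s²)^(ν/2-1) / f_G(s²; ν) · ∫_0^∞ 1{t² ≥ (ν s² + z²)/(ν+1)} · (t²)^(-(ν-1)/2) / √((ν+1)t² - ν s²) · f_G(t²; ν+1) d(t²), where C(ν) = (1+1/ν)^(-ν/2) Γ((ν+1)/2) √(ν+1) / (√π Γ(ν/2)). -/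

import Mathlib

open MeasureTheory ProbabilityTheory

/-- Standard normal CDF `Φ`. -/
noncomputable def stdNormalCDF (x : ℝ) : ℝ :=
  (gaussianReal 0 1 (Set.Iic x)).toReal

/-- Scaled chi-squared likelihood of the sample variance `s²` given variance `σ² = v`
with `m` degrees of freedom: the density of `(v/m) χ²_m` at `s²`. -/
noncomputable def sampleVarLik (m v s2 : ℝ) : ℝ :=
  m ^ (m / 2) / (v ^ (m / 2) * 2 ^ (m / 2) * Real.Gamma (m / 2)) *
    s2 ^ (m / 2 - 1) * Real.exp (-(m * s2) / (2 * v))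

/-- The marginal density `f_G(·; m)` of the sample variance with `m` degrees of freedom
under the prior `G` on the variances. -/
noncomputable def marginalDensity (G : Measure ℝ) (m s2 : ℝ) : ℝ :=
  ∫ v, sampleVarLik m v s2 ∂G

/-- The oracle conditional (partially Bayes) p-value
`P_G(z, s²) = E_G[2(1 - Φ(|z|/σ)) ∣ S² = s²]`. -/
noncomputable def condPValue (G : Measure ℝ) (ν z s2 : ℝ) : ℝ :=
  (∫ v, 2 * (1 - stdNormalCDF (|z| / Real.sqrt v)) * sampleVarLik ν v s2 ∂G) /
    marginalDensity G ν s2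

section Stmt12Aux
open Real Set Filter

/-- Measurability of the likelihood, jointly in `(s2, v)`. -/
lemma measurable_sampleVarLik2 (m : ℝ) :
    Measurable (fun p : ℝ × ℝ => sampleVarLik m p.2 p.1) := by
  unfold sampleVarLik
  fun_prop

lemma sampleVarLik_nonneg {m v s2 : ℝ} (hm : 0 < m) (hv : 0 < v) (hs2 : 0 < s2) :
    0 ≤ sampleVarLik m v s2 := by
  unfold sampleVarLik
  have h1 : (0:ℝ) < Real.Gamma (m / 2) := Real.Gamma_pos_of_pos (by linarith)
  positivity

lemma aux_rpow_exp_bound {p q t : ℝ} (hp : 0 ≤ p) (hq : 0 < q) (ht : 0 < t) :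
    t ^ p * Real.exp (-(q * t)) ≤ 1 + (Nat.factorial (Nat.ceil p) : ℝ) / q ^ (Nat.ceil p) := by
  have hfac : (0:ℝ) ≤ (Nat.factorial (Nat.ceil p) : ℝ) / q ^ (Nat.ceil p) := by positivity
  rcases le_or_gt t 1 with h | h
  · have h1 : t ^ p ≤ 1 := Real.rpow_le_one ht.le h hp
    have h2 : Real.exp (-(q * t)) ≤ 1 := by
      calc Real.exp (-(q*t)) ≤ Real.exp 0 := Real.exp_le_exp.mpr (by nlinarith)
        _ = 1 := Real.exp_zero
    have h3 : t ^ p * Real.exp (-(q * t)) ≤ 1 :=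
      mul_le_one₀ h1 (Real.exp_pos _).le h2
    linarith
  · set n := Nat.ceil p with hn
    have h1 : t ^ p ≤ t ^ (n:ℝ) :=
      Real.rpow_le_rpow_of_exponent_le h.le (Nat.le_ceil p)
    rw [Real.rpow_natCast] at h1
    have h2 : (q * t) ^ n / (Nat.factorial n : ℝ) ≤ Real.exp (q * t) := by
      calc (q * t) ^ n / (Nat.factorial n : ℝ)
          ≤ ∑ i ∈ Finset.range (n+1), (q*t) ^ i / (Nat.factorial i : ℝ) := by
            refine Finset.single_le_sum (f := fun i => (q*t)^i / (Nat.factorial i : ℝ)) ?_ ?_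
            · intro i _; positivity
            · exact Finset.self_mem_range_succ n
        _ ≤ Real.exp (q * t) := Real.sum_le_exp_of_nonneg (by positivity) _
    have h2' : q^n * t^n ≤ (Nat.factorial n : ℝ) * Real.exp (q*t) := by
      rw [← mul_pow]
      exact le_trans ((div_le_iff₀ (by positivity)).mp h2) (by ring_nf; exact le_refl _)
    have h3 : t ^ n * Real.exp (-(q*t)) ≤ (Nat.factorial n : ℝ) / q^n := by
      rw [le_div_iff₀ (by positivity)]
      calc t^n * Real.exp (-(q*t)) * q^n = (q^n * t^n) * Real.exp (-(q*t)) := by ring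
        _ ≤ ((Nat.factorial n : ℝ) * Real.exp (q*t)) * Real.exp (-(q*t)) :=
            mul_le_mul_of_nonneg_right h2' (Real.exp_pos _).le
        _ = (Nat.factorial n : ℝ) := by rw [mul_assoc, ← Real.exp_add]; simp
    have h4 : t ^ p * Real.exp (-(q * t)) ≤ t ^ n * Real.exp (-(q*t)) :=
      mul_le_mul_of_nonneg_right h1 (Real.exp_pos _).le
    linarith

lemma sampleVarLik_bound {m s2 : ℝ} (hm : 0 < m) (hs2 : 0 < s2) :
    ∃ B : ℝ, 0 ≤ B ∧ ∀ v : ℝ, 0 < v → sampleVarLik m v s2 ≤ B := by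
  set c : ℝ := m ^ (m / 2) / (2 ^ (m / 2) * Real.Gamma (m / 2)) * s2 ^ (m / 2 - 1) with hc
  have hΓ : (0:ℝ) < Real.Gamma (m / 2) := Real.Gamma_pos_of_pos (by linarith)
  have hc0 : 0 ≤ c := by positivity
  set q : ℝ := m * s2 / 2 with hq
  have hq0 : 0 < q := by positivity
  refine ⟨c * (1 + (Nat.factorial (Nat.ceil (m/2)) : ℝ) / q ^ (Nat.ceil (m/2))), by positivity, fun v hv => ?_⟩
  have hrw : sampleVarLik m v s2 = c * ((v⁻¹) ^ (m/2) * Real.exp (-(q * v⁻¹))) := by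
    unfold sampleVarLik
    rw [Real.inv_rpow hv.le]
    have hvne : v ^ (m/2) ≠ 0 := by
      have : (0:ℝ) < v ^ (m/2) := Real.rpow_pos_of_pos hv _
      exact this.ne'
    have harg : -(m * s2) / (2 * v) = -(q * v⁻¹) := by
      rw [hq]; field_simp
    rw [harg, hc]
    field_simp
  rw [hrw]
  have := aux_rpow_exp_bound (p := m/2) (q := q) (by positivity) hq0 (inv_pos.mpr hv)
  exact mul_le_mul_of_nonneg_left this hc0

lemma stdNormalCDF_eq (x : ℝ) :
    stdNormalCDF x = ∫ u in Iic x, gaussianPDFReal 0 1 u := by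
  rw [stdNormalCDF, gaussianReal_apply_eq_integral 0 one_ne_zero,
    ENNReal.toReal_ofReal (integral_nonneg (fun u => gaussianPDFReal_nonneg 0 1 u))]

lemma stdNormalCDF_nonneg (x : ℝ) : 0 ≤ stdNormalCDF x := ENNReal.toReal_nonneg

lemma stdNormalCDF_le_one (x : ℝ) : stdNormalCDF x ≤ 1 := by
  rw [stdNormalCDF]
  have h := prob_le_one (μ := gaussianReal 0 1) (s := Set.Iic x)
  exact ENNReal.toReal_le_of_le_ofReal one_pos.le (by simpa using h)

lemma one_sub_stdNormalCDF (x : ℝ) :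
    1 - stdNormalCDF x = ∫ u in Ioi x, gaussianPDFReal 0 1 u := by
  have h := integral_add_compl (measurableSet_Iic (a := x)) (integrable_gaussianPDFReal 0 1)
  rw [compl_Iic] at h
  rw [stdNormalCDF_eq]
  have h1 := integral_gaussianPDFReal_eq_one 0 (one_ne_zero (α := NNReal))
  linarith

lemma tail_integral {v : ℝ} (hv : 0 < v) (c : ℝ) :
    ∫ u in Ioi c, Real.exp (-(u^2)/(2*v))
      = Real.sqrt v * (Real.sqrt (2*Real.pi) * (1 - stdNormalCDF (c / Real.sqrt v))) := by
  have hsv : 0 < Real.sqrt v := Real.sqrt_pos.mpr hv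
  have h2π : (0:ℝ) < Real.sqrt (2*Real.pi) := Real.sqrt_pos.mpr (by positivity)
  rw [one_sub_stdNormalCDF]
  have hpdf : ∀ u : ℝ, gaussianPDFReal 0 1 u = (Real.sqrt (2*Real.pi))⁻¹ * Real.exp (-(u^2)/2) := by
    intro u
    unfold gaussianPDFReal
    norm_num
  have hpdfint : ∫ u in Ioi (c / Real.sqrt v), gaussianPDFReal 0 1 u
      = (Real.sqrt (2*Real.pi))⁻¹ * ∫ u in Ioi (c / Real.sqrt v), Real.exp (-(u^2)/2) := by
    rw [← integral_const_mul]
    exact setIntegral_congr_fun measurableSet_Ioi (fun u _ => hpdf u)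
  have hsub := integral_comp_mul_left_Ioi (fun u => Real.exp (-(u^2)/(2*v)))
    (c / Real.sqrt v) hsv
  have hcc : Real.sqrt v * (c / Real.sqrt v) = c := by field_simp
  rw [hcc] at hsub
  have harg : ∀ x : ℝ, -((Real.sqrt v * x)^2)/(2*v) = -(x^2)/2 := by
    intro x
    rw [mul_pow, Real.sq_sqrt hv.le]
    field_simp
  have hsub2 : ∫ x in Ioi (c / Real.sqrt v), Real.exp (-(x^2)/2)
      = (Real.sqrt v)⁻¹ * ∫ u in Ioi c, Real.exp (-(u^2)/(2*v)) := by
    rw [← smul_eq_mul, ← hsub]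
    refine setIntegral_congr_fun measurableSet_Ioi (fun x _ => ?_)
    rw [← harg x]
  rw [hpdfint, hsub2]
  field_simp

lemma integrableOn_exp_div_sqrt {A B c a : ℝ} (hA : 0 < A) (hc : 0 < c)
    (ha : 0 ≤ A * a - B) :
    IntegrableOn (fun t => Real.exp (-(c*t)) / Real.sqrt (A*t - B)) (Ici a) := by
  have key : ∀ t ∈ Ici a, Real.exp (-(c*t)) / Real.sqrt (A*t - B)
      = (A*t - B) ^ (-(1/2) : ℝ) * Real.exp (-(c*t)) := by
    intro t ht
    have hX : 0 ≤ A*t - B := by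
      have : A * a ≤ A * t := mul_le_mul_of_nonneg_left ht hA.le
      linarith
    rcases eq_or_lt_of_le hX with h | h
    · rw [← h, Real.sqrt_zero, div_zero, Real.zero_rpow (by norm_num), zero_mul]
    · rw [Real.rpow_neg hX, ← Real.sqrt_eq_rpow, div_eq_mul_inv]
      exact mul_comm _ _
  -- part 1 : Icc a (a+1)
  have h1 : IntegrableOn (fun t => Real.exp (-(c*t)) / Real.sqrt (A*t - B)) (Icc a (a+1)) := by
    have hii : IntervalIntegrable (fun x : ℝ => x ^ (-(1/2) : ℝ)) volume (A*a - B) (A*(a+1) - B) :=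
      intervalIntegral.intervalIntegrable_rpow' (by norm_num)
    have hii2 := (hii.comp_sub_right B).comp_mul_left (c := A)
    have hend1 : (A*a - B + B)/A = a := by field_simp; ring
    have hend2 : (A*(a+1) - B + B)/A = a + 1 := by field_simp; ring
    rw [hend1, hend2] at hii2
    have hii3 : IntervalIntegrable
        (fun t => (A*t - B) ^ (-(1/2) : ℝ) * Real.exp (-(c*t))) volume a (a+1) := by
      refine IntervalIntegrable.mul_continuousOn ?_ ?_
      · exact hii2
      · exact (by fun_prop : Continuous fun t : ℝ => Real.exp (-(c*t))).continuousOn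
    have := (intervalIntegrable_iff_integrableOn_Icc_of_le (by linarith : a ≤ a+1)).mp hii3
    exact (this.congr_fun (fun t ht => (key t (mem_Icc.mp ht).1).symm) measurableSet_Icc)
  -- part 2 : Ioi (a+1)
  have hb : 0 < A*(a+1) - B := by nlinarith
  have h2 : IntegrableOn (fun t => Real.exp (-(c*t)) / Real.sqrt (A*t - B)) (Ioi (a+1)) := by
    have hint : IntegrableOn (fun t => (Real.sqrt (A*(a+1) - B))⁻¹ * Real.exp (-(c*t))) (Ioi (a+1)) := by
      simpa only [neg_mul, IntegrableOn] using
        (exp_neg_integrableOn_Ioi (a+1) hc).const_mul ((Real.sqrt (A*(a+1) - B))⁻¹)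
    refine Integrable.mono' hint ?_ ?_
    · exact ((by fun_prop : Measurable fun t : ℝ => Real.exp (-(c*t)) / Real.sqrt (A*t - B))).aestronglyMeasurable
    · refine (ae_restrict_iff' measurableSet_Ioi).mpr (ae_of_all _ (fun t ht => ?_))
      have ht' : a + 1 < t := ht
      have hX : 0 < A*t - B := by nlinarith
      have hmono : Real.sqrt (A*(a+1) - B) ≤ Real.sqrt (A*t - B) := by
        apply Real.sqrt_le_sqrt; nlinarith
      have hsb : 0 < Real.sqrt (A*(a+1) - B) := Real.sqrt_pos.mpr hb
      rw [Real.norm_eq_abs, abs_of_nonneg (by positivity)]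
      rw [div_le_iff₀ (Real.sqrt_pos.mpr hX)]
      rw [mul_comm ((Real.sqrt (A*(a+1) - B))⁻¹) _, mul_assoc]
      nlinarith [Real.exp_pos (-(c*t)), mul_le_mul_of_nonneg_left hmono
        (inv_nonneg.mpr hsb.le), inv_mul_cancel₀ hsb.ne']
  have hsubset : Ici a ⊆ Icc a (a+1) ∪ Ioi (a+1) := by
    intro t ht
    rcases le_or_gt t (a+1) with h | h
    · exact Or.inl ⟨ht, h⟩
    · exact Or.inr h
  exact (h1.union h2).mono_set hsubset

lemma subst_integral {ν s2 v : ℝ} (hν0 : 0 < ν) (hs2 : 0 < s2) (hv : 0 < v) (z : ℝ) :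
    ∫ t in Ioi ((ν*s2 + z^2)/(ν+1)), Real.exp (-((ν+1)*t)/(2*v)) / Real.sqrt ((ν+1)*t - ν*s2)
      = (2/(ν+1)) * (Real.exp (-(ν*s2)/(2*v)) * ∫ u in Ioi |z|, Real.exp (-(u^2)/(2*v))) := by
  have hν1 : (0:ℝ) < ν + 1 := by linarith
  set a : ℝ := (ν*s2 + z^2)/(ν+1) with ha
  have haz : (ν+1) * a - ν*s2 = z^2 := by rw [ha]; field_simp; ring
  have ha0 : 0 < a := by rw [ha]; positivity
  set f : ℝ → ℝ := fun u => (u^2 + ν*s2)/(ν+1) with hf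
  set f' : ℝ → ℝ := fun u => 2*u/(ν+1) with hf'
  set g : ℝ → ℝ := fun t => Real.exp (-((ν+1)*t)/(2*v)) / Real.sqrt ((ν+1)*t - ν*s2) with hg
  have hfz : f |z| = a := by simp only [hf, ha, sq_abs]; ring
  have himg1 : f '' Ici |z| ⊆ Ici a := by
    rintro _ ⟨u, hu, rfl⟩
    have hu' : |z| ≤ u := hu
    have : z^2 ≤ u^2 := by
      have h1 : |z| * |z| ≤ u * u := mul_self_le_mul_self (abs_nonneg z) hu'
      nlinarith [abs_mul_abs_self z]
    simp only [hf, mem_Ici, ha]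
    rw [div_le_div_iff₀ hν1 hν1]
    nlinarith
  have himg2 : f '' Ioi |z| ⊆ Ioi a := by
    rintro _ ⟨u, hu, rfl⟩
    have hu' : |z| < u := hu
    have hu0 : 0 < u := lt_of_le_of_lt (abs_nonneg z) hu'
    have : z^2 < u^2 := by
      nlinarith [abs_mul_abs_self z, abs_nonneg z]
    simp only [hf, mem_Ioi, ha]
    rw [div_lt_div_iff₀ hν1 hν1]
    nlinarith
  have hgeq : ∀ t ∈ Ici a, g t = Real.exp (-(((ν+1)/(2*v))*t)) / Real.sqrt ((ν+1)*t - ν*s2) := by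
    intro t _
    simp only [hg]
    rw [show -((ν+1)*t)/(2*v) = -(((ν+1)/(2*v))*t) from by ring]
  have hgint : IntegrableOn g (Ici a) := by
    have := integrableOn_exp_div_sqrt (A := ν+1) (B := ν*s2) (c := (ν+1)/(2*v)) (a := a)
      hν1 (by positivity) (by rw [haz]; positivity)
    exact this.congr_fun (fun t ht => (hgeq t ht).symm) measurableSet_Ici
  -- integrand equality on Ici |z| (a.e.)
  have hnice : IntegrableOn
      (fun u => (2/(ν+1)) * (Real.exp (-(ν*s2)/(2*v)) * Real.exp (-(u^2)/(2*v)))) (Ici |z|) := by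
    have hb : (0:ℝ) < 1/(2*v) := by positivity
    have := integrable_exp_neg_mul_sq hb
    have h2 : Integrable (fun u : ℝ => (2/(ν+1)) * (Real.exp (-(ν*s2)/(2*v)) * Real.exp (-(1/(2*v)) * u^2))) :=
      ((this.const_mul _).const_mul _)
    have h3 : (fun u : ℝ => (2/(ν+1)) * (Real.exp (-(ν*s2)/(2*v)) * Real.exp (-(1/(2*v)) * u^2)))
        = (fun u => (2/(ν+1)) * (Real.exp (-(ν*s2)/(2*v)) * Real.exp (-(u^2)/(2*v)))) := by
      funext u; congr 2; ring_nf
    rw [h3] at h2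
    exact h2.integrableOn
  have hae0 : ∀ᵐ u : ℝ ∂(volume.restrict (Ici |z|)), u ≠ 0 := by
    refine ae_restrict_of_ae ?_
    rw [ae_iff]
    have : {u : ℝ | ¬ u ≠ 0} = {0} := by ext u; simp
    rw [this]
    exact Real.volume_singleton
  have hcomp_eq : ∀ u : ℝ, u ∈ Ici |z| → u ≠ 0 →
      (g ∘ f) u * f' u = (2/(ν+1)) * (Real.exp (-(ν*s2)/(2*v)) * Real.exp (-(u^2)/(2*v))) := by
    intro u hu hu0
    have hu1 : 0 ≤ u := le_trans (abs_nonneg z) hu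
    have hu2 : 0 < u := lt_of_le_of_ne hu1 (Ne.symm hu0)
    have harg : (ν+1) * f u - ν*s2 = u^2 := by
      simp only [hf]; field_simp; ring
    have hexp : -((ν+1) * f u)/(2*v) = -(u^2 + ν*s2)/(2*v) := by
      simp only [hf]
      rw [div_eq_div_iff (by positivity) (by positivity)]
      field_simp
    simp only [Function.comp_apply, hg, hf']
    rw [harg, hexp, Real.sqrt_sq hu1]
    rw [show -(u^2 + ν*s2)/(2*v) = -(ν*s2)/(2*v) + -(u^2)/(2*v) by field_simp; ring]
    rw [Real.exp_add]
    field_simp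
  have hcomp_int : IntegrableOn (fun u => (g ∘ f) u * f' u) (Ici |z|) := by
    refine hnice.congr_fun_ae ?_
    refine (ae_restrict_mem measurableSet_Ici).mp (hae0.mono ?_)
    intro u hu0 hu
    exact (hcomp_eq u hu hu0).symm
  have hmain := integral_comp_mul_deriv_Ioi (f := f) (f' := f') (g := g) (a := |z|)
    ?_ ?_ ?_ ?_ (hgint.mono_set himg1) hcomp_int
  · rw [hfz] at hmain
    rw [← hmain]
    have : ∫ x in Ioi |z|, (g ∘ f) x * f' x
        = ∫ x in Ioi |z|, (2/(ν+1)) * (Real.exp (-(ν*s2)/(2*v)) * Real.exp (-(x^2)/(2*v))) := by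
      refine integral_congr_ae ?_
      have hae0' : ∀ᵐ u : ℝ ∂(volume.restrict (Ioi |z|)), u ≠ 0 := by
        refine ae_restrict_of_ae ?_
        rw [ae_iff]
        have : {u : ℝ | ¬ u ≠ 0} = {0} := by ext u; simp
        rw [this]
        exact Real.volume_singleton
      refine (ae_restrict_mem measurableSet_Ioi).mp (hae0'.mono ?_)
      intro u hu0 hu
      exact hcomp_eq u (mem_Ici.mpr (le_of_lt hu)) hu0
    rw [this, integral_const_mul, integral_const_mul]
  · -- ContinuousOn f (Ici |z|)
    exact ((continuous_pow 2).add continuous_const).continuousOn.div_const _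
  · -- Tendsto f atTop atTop
    apply Tendsto.atTop_div_const hν1
    exact tendsto_atTop_add_const_right _ _ (tendsto_pow_atTop (by norm_num))
  · -- derivative
    intro x hx
    have : HasDerivAt f (2*x/(ν+1)) x := by
      have h1 : HasDerivAt (fun u : ℝ => u^2 + ν*s2) (2*x) x := by
        simpa using ((hasDerivAt_pow 2 x).add_const (ν*s2))
      exact h1.div_const (ν+1)
    exact this.hasDerivWithinAt
  · -- ContinuousOn g (f '' Ioi |z|)
    refine ContinuousOn.mono ?_ himg2
    refine ContinuousOn.div ?_ ?_ ?_
    · exact (Real.continuous_exp.comp ((continuous_const.mul continuous_id').neg.div_const _)).continuousOn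
    · exact (Real.continuous_sqrt.comp ((continuous_const.mul continuous_id').sub continuous_const)).continuousOn
    · intro t ht
      have ht' : a < t := ht
      have : 0 < (ν+1)*t - ν*s2 := by
        have : z^2 < (ν+1)*t - ν*s2 := by rw [← haz]; nlinarith
        nlinarith [sq_nonneg z]
      exact (Real.sqrt_pos.mpr this).ne'

lemma const_identity {ν v s2 : ℝ} (hν : 2 ≤ ν) (hs2 : 0 < s2) (hv : 0 < v) (E : ℝ) :
    (1 + 1/ν) ^ (-(ν/2)) * Real.Gamma ((ν+1)/2) * Real.sqrt (ν+1) /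
        (Real.sqrt Real.pi * Real.Gamma (ν/2)) * s2 ^ (ν/2 - 1) *
      ((ν+1) ^ ((ν+1)/2) / (v ^ ((ν+1)/2) * 2 ^ ((ν+1)/2) * Real.Gamma ((ν+1)/2)) *
        ((2/(ν+1)) * (Real.exp (-(ν*s2)/(2*v)) *
          (Real.sqrt v * (Real.sqrt (2*Real.pi) * E)))))
    = 2 * E * sampleVarLik ν v s2 := by
  have hν0 : (0:ℝ) < ν := by linarith
  have hν1 : (0:ℝ) < ν + 1 := by linarith
  have hΓ1 : (0:ℝ) < Real.Gamma (ν/2) := Real.Gamma_pos_of_pos (by linarith)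
  have hΓ2 : (0:ℝ) < Real.Gamma ((ν+1)/2) := Real.Gamma_pos_of_pos (by linarith)
  have hπ : (0:ℝ) < Real.pi := Real.pi_pos
  unfold sampleVarLik
  rw [show (1:ℝ) + 1/ν = (ν+1)/ν from by field_simp]
  rw [show ((ν+1)/ν : ℝ) ^ (-(ν/2)) = ν ^ (ν/2) / (ν+1) ^ (ν/2) from by
    rw [Real.rpow_neg (by positivity), Real.div_rpow hν1.le hν0.le, inv_div]]
  rw [show ((ν+1)/2 : ℝ) = ν/2 + 1/2 from by ring]
  rw [Real.rpow_add hν1, Real.rpow_add hv, Real.rpow_add (by norm_num : (0:ℝ) < 2)]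
  rw [show Real.sqrt (2*Real.pi) = Real.sqrt 2 * Real.sqrt Real.pi from
    Real.sqrt_mul (by norm_num) _]
  rw [Real.sqrt_eq_rpow (ν+1), Real.sqrt_eq_rpow v, Real.sqrt_eq_rpow 2]
  have hxx : ((ν+1:ℝ) ^ (1/(2:ℝ) : ℝ)) * ((ν+1:ℝ) ^ (1/(2:ℝ) : ℝ)) = ν + 1 := by
    rw [← Real.rpow_add hν1]
    norm_num
  have hsπ : (0:ℝ) < Real.sqrt Real.pi := Real.sqrt_pos.mpr hπ
  have p1 : (0:ℝ) < ν ^ (ν/2 : ℝ) := Real.rpow_pos_of_pos hν0 _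
  have p2 : (0:ℝ) < (ν+1) ^ (ν/2 : ℝ) := Real.rpow_pos_of_pos hν1 _
  have p3 : (0:ℝ) < (ν+1) ^ (1/(2:ℝ) : ℝ) := Real.rpow_pos_of_pos hν1 _
  have p4 : (0:ℝ) < v ^ (ν/2 : ℝ) := Real.rpow_pos_of_pos hv _
  have p5 : (0:ℝ) < v ^ (1/(2:ℝ) : ℝ) := Real.rpow_pos_of_pos hv _
  have p6 : (0:ℝ) < (2:ℝ) ^ (ν/2 : ℝ) := Real.rpow_pos_of_pos (by norm_num) _
  have p7 : (0:ℝ) < (2:ℝ) ^ (1/(2:ℝ) : ℝ) := Real.rpow_pos_of_pos (by norm_num) _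
  set x1 := (ν:ℝ) ^ (ν/2 : ℝ)
  set x2 := ((ν+1):ℝ) ^ (ν/2 : ℝ)
  set x3 := ((ν+1):ℝ) ^ (1/(2:ℝ) : ℝ)
  set x4 := (v:ℝ) ^ (ν/2 : ℝ)
  set x5 := (v:ℝ) ^ (1/(2:ℝ) : ℝ)
  set x6 := (2:ℝ) ^ (ν/2 : ℝ)
  set x7 := (2:ℝ) ^ (1/(2:ℝ) : ℝ)
  rw [show ((ν:ℝ)+1) = x3 * x3 from hxx.symm]
  field_simp
lemma Jval {ν s2 v : ℝ} (hν : 2 ≤ ν) (hs2 : 0 < s2) (hv : 0 < v) (z : ℝ) :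
    (1 + 1/ν) ^ (-(ν/2)) * Real.Gamma ((ν+1)/2) * Real.sqrt (ν+1) /
        (Real.sqrt Real.pi * Real.Gamma (ν/2)) * s2 ^ (ν/2 - 1) *
      (∫ t2 in Ioi (0:ℝ),
        (Ici ((ν*s2 + z^2)/(ν+1))).indicator
          (fun t2 => t2 ^ (-((ν-1)/2)) / Real.sqrt ((ν+1)*t2 - ν*s2)) t2
          * sampleVarLik (ν+1) v t2)
    = 2 * (1 - stdNormalCDF (|z| / Real.sqrt v)) * sampleVarLik ν v s2 := by
  have hν0 : (0:ℝ) < ν := by linarith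
  have hν1 : (0:ℝ) < ν + 1 := by linarith
  have ha0 : 0 < (ν*s2 + z^2)/(ν+1) := by positivity
  have haz : (ν+1) * ((ν*s2 + z^2)/(ν+1)) - ν*s2 = z^2 := by field_simp; ring
  have step1 : ∀ t2 : ℝ,
      (Ici ((ν*s2 + z^2)/(ν+1))).indicator
        (fun t2 => t2 ^ (-((ν-1)/2)) / Real.sqrt ((ν+1)*t2 - ν*s2)) t2
        * sampleVarLik (ν+1) v t2
      = (Ici ((ν*s2 + z^2)/(ν+1))).indicator
        (fun t2 => t2 ^ (-((ν-1)/2)) / Real.sqrt ((ν+1)*t2 - ν*s2)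
          * sampleVarLik (ν+1) v t2) t2 :=
    fun t2 => (Set.indicator_mul_left _ _ _).symm
  rw [setIntegral_congr_fun measurableSet_Ioi (fun t2 _ => step1 t2)]
  rw [integral_indicator measurableSet_Ici, Measure.restrict_restrict measurableSet_Ici]
  rw [show Ici ((ν*s2 + z^2)/(ν+1)) ∩ Ioi 0 = Ici ((ν*s2 + z^2)/(ν+1)) from
    inter_eq_left.mpr (fun t ht => lt_of_lt_of_le ha0 ht)]
  rw [integral_Ici_eq_integral_Ioi]
  have step3 : ∀ t2 ∈ Ioi ((ν*s2 + z^2)/(ν+1)),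
      t2 ^ (-((ν-1)/2)) / Real.sqrt ((ν+1)*t2 - ν*s2) * sampleVarLik (ν+1) v t2
      = (ν+1) ^ ((ν+1)/2) / (v ^ ((ν+1)/2) * 2 ^ ((ν+1)/2) * Real.Gamma ((ν+1)/2)) *
          (Real.exp (-((ν+1)*t2)/(2*v)) / Real.sqrt ((ν+1)*t2 - ν*s2)) := by
    intro t2 ht2
    have ht2a : (ν*s2 + z^2)/(ν+1) < t2 := ht2
    have ht2pos : 0 < t2 := lt_trans ha0 ht2a
    have key : t2 ^ (-((ν-1)/2)) * t2 ^ ((ν+1)/2 - 1) = 1 := by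
      rw [← Real.rpow_add ht2pos, show -((ν-1)/2) + ((ν+1)/2 - 1) = (0:ℝ) from by ring,
        Real.rpow_zero]
    unfold sampleVarLik
    calc t2 ^ (-((ν-1)/2)) / Real.sqrt ((ν+1)*t2 - ν*s2) *
          ((ν+1) ^ ((ν+1)/2) / (v ^ ((ν+1)/2) * 2 ^ ((ν+1)/2) * Real.Gamma ((ν+1)/2)) *
            t2 ^ ((ν+1)/2 - 1) * Real.exp (-((ν+1)*t2)/(2*v)))
        = (ν+1) ^ ((ν+1)/2) / (v ^ ((ν+1)/2) * 2 ^ ((ν+1)/2) * Real.Gamma ((ν+1)/2)) *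
            (Real.exp (-((ν+1)*t2)/(2*v)) / Real.sqrt ((ν+1)*t2 - ν*s2)) *
            (t2 ^ (-((ν-1)/2)) * t2 ^ ((ν+1)/2 - 1)) := by ring
      _ = (ν+1) ^ ((ν+1)/2) / (v ^ ((ν+1)/2) * 2 ^ ((ν+1)/2) * Real.Gamma ((ν+1)/2)) *
            (Real.exp (-((ν+1)*t2)/(2*v)) / Real.sqrt ((ν+1)*t2 - ν*s2)) := by
          rw [key, mul_one]
  rw [setIntegral_congr_fun measurableSet_Ioi step3, integral_const_mul]
  rw [subst_integral hν0 hs2 hv z]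
  rw [tail_integral hv |z|]
  linear_combination const_identity hν hs2 hv (1 - stdNormalCDF (|z| / Real.sqrt v))

lemma J_integrableOn {ν s2 v : ℝ} (hν : 2 ≤ ν) (hs2 : 0 < s2) (hv : 0 < v) (z : ℝ) :
    IntegrableOn (fun t2 =>
      (Ici ((ν*s2 + z^2)/(ν+1))).indicator
        (fun t2 => t2 ^ (-((ν-1)/2)) / Real.sqrt ((ν+1)*t2 - ν*s2)) t2
        * sampleVarLik (ν+1) v t2) (Ioi 0) := by
  have hν0 : (0:ℝ) < ν := by linarith
  have hν1 : (0:ℝ) < ν + 1 := by linarith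
  have ha0 : 0 < (ν*s2 + z^2)/(ν+1) := by positivity
  have haz : (ν+1) * ((ν*s2 + z^2)/(ν+1)) - ν*s2 = z^2 := by field_simp; ring
  have heq : (fun t2 =>
      (Ici ((ν*s2 + z^2)/(ν+1))).indicator
        (fun t2 => t2 ^ (-((ν-1)/2)) / Real.sqrt ((ν+1)*t2 - ν*s2)) t2
        * sampleVarLik (ν+1) v t2)
      = (Ici ((ν*s2 + z^2)/(ν+1))).indicator
        (fun t2 => (ν+1) ^ ((ν+1)/2) / (v ^ ((ν+1)/2) * 2 ^ ((ν+1)/2) * Real.Gamma ((ν+1)/2)) *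
          (Real.exp (-(((ν+1)/(2*v))*t2)) / Real.sqrt ((ν+1)*t2 - ν*s2))) := by
    funext t2
    rw [Set.indicator_mul_left]
    rcases em (t2 ∈ Ici ((ν*s2 + z^2)/(ν+1))) with h | h
    · rw [Set.indicator_of_mem h, Set.indicator_of_mem h]
      have ht2pos : 0 < t2 := lt_of_lt_of_le ha0 h
      have key : t2 ^ (-((ν-1)/2)) * t2 ^ ((ν+1)/2 - 1) = 1 := by
        rw [← Real.rpow_add ht2pos, show -((ν-1)/2) + ((ν+1)/2 - 1) = (0:ℝ) from by ring,
          Real.rpow_zero]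
      have hexp : Real.exp (-(((ν+1)/(2*v))*t2)) = Real.exp (-((ν+1)*t2)/(2*v)) := by
        congr 1; field_simp
      rw [hexp]
      unfold sampleVarLik
      calc t2 ^ (-((ν-1)/2)) / Real.sqrt ((ν+1)*t2 - ν*s2) *
            ((ν+1) ^ ((ν+1)/2) / (v ^ ((ν+1)/2) * 2 ^ ((ν+1)/2) * Real.Gamma ((ν+1)/2)) *
              t2 ^ ((ν+1)/2 - 1) * Real.exp (-((ν+1)*t2)/(2*v)))
          = (ν+1) ^ ((ν+1)/2) / (v ^ ((ν+1)/2) * 2 ^ ((ν+1)/2) * Real.Gamma ((ν+1)/2)) *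
              (Real.exp (-((ν+1)*t2)/(2*v)) / Real.sqrt ((ν+1)*t2 - ν*s2)) *
              (t2 ^ (-((ν-1)/2)) * t2 ^ ((ν+1)/2 - 1)) := by ring
        _ = (ν+1) ^ ((ν+1)/2) / (v ^ ((ν+1)/2) * 2 ^ ((ν+1)/2) * Real.Gamma ((ν+1)/2)) *
              (Real.exp (-((ν+1)*t2)/(2*v)) / Real.sqrt ((ν+1)*t2 - ν*s2)) := by
            rw [key, mul_one]
    · rw [Set.indicator_of_notMem h, Set.indicator_of_notMem h]
      simp
  rw [heq, IntegrableOn, integrable_indicator_iff measurableSet_Ici,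
    IntegrableOn, Measure.restrict_restrict measurableSet_Ici]
  rw [show Ici ((ν*s2 + z^2)/(ν+1)) ∩ Ioi 0 = Ici ((ν*s2 + z^2)/(ν+1)) from
    inter_eq_left.mpr (fun t ht => lt_of_lt_of_le ha0 ht)]
  exact (integrableOn_exp_div_sqrt (A := ν+1) (B := ν*s2) (c := (ν+1)/(2*v))
    (a := (ν*s2 + z^2)/(ν+1)) hν1 (by positivity) (by rw [haz]; positivity)).const_mul _

end Stmt12Aux

open Real Set Filter in
/-- Eddington/Tweedie-type integral representation of the conditional p-value:
it depends on `G` only through the marginal densities `f_G(·;ν)` and `f_G(·;ν+1)`. -/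
theorem stmt_12 (ν : ℝ) (hν : 2 ≤ ν) (G : Measure ℝ) [IsProbabilityMeasure G]
    (hG : G (Set.Ioi 0)ᶜ = 0) :
    ∀ z s2 : ℝ, 0 < s2 →
      condPValue G ν z s2 =
        (1 + 1 / ν) ^ (-(ν / 2)) * Real.Gamma ((ν + 1) / 2) * Real.sqrt (ν + 1) /
            (Real.sqrt Real.pi * Real.Gamma (ν / 2)) *
          (s2 ^ (ν / 2 - 1) / marginalDensity G ν s2) *
          ∫ t2 in Set.Ioi (0 : ℝ),
            (if (ν * s2 + z ^ 2) / (ν + 1) ≤ t2 then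
              t2 ^ (-((ν - 1) / 2)) / Real.sqrt ((ν + 1) * t2 - ν * s2) *
                marginalDensity G (ν + 1) t2
            else 0) := by
  intro z s2 hs2
  have hν0 : (0:ℝ) < ν := by linarith
  have hν1 : (0:ℝ) < ν + 1 := by linarith
  have hΓ1 : (0:ℝ) < Real.Gamma (ν/2) := Real.Gamma_pos_of_pos (by linarith)
  have hΓ2 : (0:ℝ) < Real.Gamma ((ν+1)/2) := Real.Gamma_pos_of_pos (by linarith)
  have hCpos : (0:ℝ) < (1 + 1 / ν) ^ (-(ν / 2)) * Real.Gamma ((ν + 1) / 2) *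
      Real.sqrt (ν + 1) / (Real.sqrt Real.pi * Real.Gamma (ν / 2)) := by
    have h1 : (0:ℝ) < (1 + 1/ν) ^ (-(ν/2)) := Real.rpow_pos_of_pos (by positivity) _
    have h2 : (0:ℝ) < Real.sqrt (ν+1) := Real.sqrt_pos.mpr hν1
    have h3 : (0:ℝ) < Real.sqrt Real.pi := Real.sqrt_pos.mpr Real.pi_pos
    exact div_pos (mul_pos (mul_pos h1 hΓ2) h2) (mul_pos h3 hΓ1)
  have hspos : (0:ℝ) < s2 ^ (ν/2 - 1) := Real.rpow_pos_of_pos hs2 _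
  have hCs : (0:ℝ) < ((1 + 1 / ν) ^ (-(ν / 2)) * Real.Gamma ((ν + 1) / 2) *
      Real.sqrt (ν + 1) / (Real.sqrt Real.pi * Real.Gamma (ν / 2))) * s2 ^ (ν/2 - 1) :=
    mul_pos hCpos hspos
  have hGae : ∀ᵐ v ∂G, 0 < v := by
    rw [ae_iff]
    have : {v : ℝ | ¬ 0 < v} = (Set.Ioi 0)ᶜ := by ext u; simp
    rw [this]
    exact hG
  -- notation
  set ind : ℝ → ℝ := (Set.Ici ((ν*s2 + z^2)/(ν+1))).indicator
      (fun t2 => t2 ^ (-((ν-1)/2)) / Real.sqrt ((ν+1)*t2 - ν*s2)) with hind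
  have hIR : (∫ t2 in Set.Ioi (0:ℝ),
      (if (ν * s2 + z ^ 2) / (ν + 1) ≤ t2 then
        t2 ^ (-((ν - 1) / 2)) / Real.sqrt ((ν + 1) * t2 - ν * s2) *
          marginalDensity G (ν + 1) t2
      else 0))
      = ∫ t2 in Set.Ioi (0:ℝ), ind t2 * marginalDensity G (ν+1) t2 := by
    refine setIntegral_congr_fun measurableSet_Ioi (fun t2 _ => ?_)
    rw [hind, Set.indicator_apply]
    simp only [Set.mem_Ici]
    by_cases h : (ν * s2 + z ^ 2) / (ν + 1) ≤ t2 <;> simp [h]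
  have hptw : ∀ t2 : ℝ, ind t2 * marginalDensity G (ν+1) t2
      = ∫ v, ind t2 * sampleVarLik (ν+1) v t2 ∂G := by
    intro t2
    rw [marginalDensity, integral_const_mul]
  -- measurability of the product integrand
  have hindmeas : Measurable ind := by
    rw [hind]
    exact Measurable.indicator
      (by fun_prop : Measurable fun t2 : ℝ => t2 ^ (-((ν-1)/2)) / Real.sqrt ((ν+1)*t2 - ν*s2))
      measurableSet_Ici
  have hmeas : Measurable (Function.uncurry fun t2 v => ind t2 * sampleVarLik (ν+1) v t2) :=
    (hindmeas.comp measurable_fst).mul (measurable_sampleVarLik2 (ν+1))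
  have hnonneg : ∀ v : ℝ, 0 < v → ∀ t2 : ℝ, 0 ≤ ind t2 * sampleVarLik (ν+1) v t2 := by
    intro v hv t2
    rcases em (t2 ∈ Set.Ici ((ν*s2 + z^2)/(ν+1))) with h | h
    · have ht2pos : 0 < t2 := lt_of_lt_of_le (by positivity) h
      refine mul_nonneg ?_ (sampleVarLik_nonneg hν1 hv ht2pos)
      rw [hind, Set.indicator_of_mem h]
      positivity
    · rw [hind, Set.indicator_of_notMem h, zero_mul]
  have hFintOn : ∀ v : ℝ, 0 < v →
      IntegrableOn (fun t2 => ind t2 * sampleVarLik (ν+1) v t2) (Set.Ioi 0) := by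
    intro v hv
    rw [hind]
    exact J_integrableOn hν hs2 hv z
  obtain ⟨B, hB0, hB⟩ := sampleVarLik_bound (m := ν) hν0 hs2
  have hJle : ∀ v : ℝ, 0 < v → (∫ t2 in Set.Ioi (0:ℝ), ind t2 * sampleVarLik (ν+1) v t2)
      ≤ 2 * B / (((1 + 1 / ν) ^ (-(ν / 2)) * Real.Gamma ((ν + 1) / 2) *
        Real.sqrt (ν + 1) / (Real.sqrt Real.pi * Real.Gamma (ν / 2))) * s2 ^ (ν/2 - 1)) := by
    intro v hv
    have hJ := Jval (v := v) hν hs2 hv z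
    rw [← hind] at hJ
    have hnum : 2 * (1 - stdNormalCDF (|z| / Real.sqrt v)) * sampleVarLik ν v s2 ≤ 2 * B := by
      have hΦ1 : stdNormalCDF (|z| / Real.sqrt v) ≤ 1 := stdNormalCDF_le_one _
      have hΦ0 : 0 ≤ stdNormalCDF (|z| / Real.sqrt v) := stdNormalCDF_nonneg _
      have hL0 : 0 ≤ sampleVarLik ν v s2 := sampleVarLik_nonneg hν0 hv hs2
      have hLB : sampleVarLik ν v s2 ≤ B := hB v hv
      nlinarith
    rw [le_div_iff₀ hCs]
    calc (∫ t2 in Set.Ioi (0:ℝ), ind t2 * sampleVarLik (ν+1) v t2) *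
          (((1 + 1 / ν) ^ (-(ν / 2)) * Real.Gamma ((ν + 1) / 2) *
            Real.sqrt (ν + 1) / (Real.sqrt Real.pi * Real.Gamma (ν / 2))) * s2 ^ (ν/2 - 1))
        = 2 * (1 - stdNormalCDF (|z| / Real.sqrt v)) * sampleVarLik ν v s2 := by
          linear_combination hJ
      _ ≤ 2 * B := hnum
  have hFint : Integrable (Function.uncurry fun t2 v => ind t2 * sampleVarLik (ν+1) v t2)
      ((volume.restrict (Set.Ioi 0)).prod G) := by
    refine ⟨hmeas.aestronglyMeasurable, ?_⟩
    have hnnae : 0 ≤ᵐ[(volume.restrict (Set.Ioi 0)).prod G]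
        (Function.uncurry fun t2 v => ind t2 * sampleVarLik (ν+1) v t2) := by
      refine ae_iff.mpr (measure_mono_null (fun p hp => ?_)
        (show ((volume.restrict (Set.Ioi 0)).prod G) (Set.univ ×ˢ (Set.Ioi 0)ᶜ) = 0 from ?_))
      · refine Set.mem_prod.mpr ⟨Set.mem_univ _, fun h2 => hp ?_⟩
        exact hnonneg p.2 h2 p.1
      · rw [Measure.prod_prod, hG, mul_zero]
    rw [hasFiniteIntegral_iff_ofReal hnnae]
    rw [lintegral_prod_symm _ (hmeas.ennreal_ofReal.aemeasurable)]
    have hle : ∫⁻ v, (∫⁻ t2, ENNReal.ofReal (ind t2 * sampleVarLik (ν+1) v t2)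
          ∂(volume.restrict (Set.Ioi 0))) ∂G
        ≤ ∫⁻ _, ENNReal.ofReal (2 * B / (((1 + 1 / ν) ^ (-(ν / 2)) *
            Real.Gamma ((ν + 1) / 2) * Real.sqrt (ν + 1) /
            (Real.sqrt Real.pi * Real.Gamma (ν / 2))) * s2 ^ (ν/2 - 1))) ∂G := by
      refine lintegral_mono_ae (hGae.mono fun v hv => ?_)
      rw [← ofReal_integral_eq_lintegral_ofReal (hFintOn v hv)
        (ae_of_all _ (fun t2 => hnonneg v hv t2))]
      exact ENNReal.ofReal_le_ofReal (hJle v hv)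
    refine lt_of_le_of_lt hle ?_
    rw [lintegral_const, measure_univ, mul_one]
    exact ENNReal.ofReal_lt_top
  have hswap := integral_integral_swap hFint
  have hval : ∀ᵐ v ∂G, (∫ t2 in Set.Ioi (0:ℝ), ind t2 * sampleVarLik (ν+1) v t2)
      = (2 * (1 - stdNormalCDF (|z| / Real.sqrt v)) * sampleVarLik ν v s2) /
        (((1 + 1 / ν) ^ (-(ν / 2)) * Real.Gamma ((ν + 1) / 2) * Real.sqrt (ν + 1) /
          (Real.sqrt Real.pi * Real.Gamma (ν / 2))) * s2 ^ (ν/2 - 1)) := by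
    refine hGae.mono fun v hv => ?_
    have hJ := Jval (v := v) hν hs2 hv z
    rw [← hind] at hJ
    rw [eq_div_iff hCs.ne']
    linear_combination hJ
  have cancel : ∀ aa bb cc dd : ℝ, aa * bb ≠ 0 → aa * (bb / cc) * (dd / (aa * bb)) = dd / cc := by
    intro aa bb cc dd h
    have haa : aa ≠ 0 := left_ne_zero_of_mul h
    have hbb : bb ≠ 0 := right_ne_zero_of_mul h
    rcases eq_or_ne cc 0 with rfl | hcc
    · simp
    · field_simp
  rw [hIR, setIntegral_congr_fun measurableSet_Ioi (fun t2 _ => hptw t2), hswap,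
    integral_congr_ae hval, integral_div]
  rw [condPValue]
  exact (cancel _ _ _ _ hCs.ne').symm
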